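/- Let q ≥ 2 and let 𝒯 = {X_1 → expr_1, …, X_n → expr_n} be an SLP representing T with |T| ≥ q. Then the number of distinct strings P of length q with Occ(T,P) ≠ ∅ is at most Σ {|t_i| - (q-1) : X_i has a nonterminal rule and |val(X_i)| ≥ q}, which is in turn at most (q-1)·n. -/

import Mathlib

/-- A straight line program over alphabet `α`: variables are `Fin n` (variable
`X_i` of the paper corresponds to index `i-1`), each with either a terminal
rule (a single character) or a nonterminal rule `X_i → X_j X_k` with `j,k < i`. -/
structure SLP (α : Type) where
  n : ℕ
  npos : 0 < n
  rule : Fin n → α ⊕ (Fin n × Fin n)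
  wf : ∀ i jk, rule i = Sum.inr jk → jk.1 < i ∧ jk.2 < i

namespace SLP

variable {α : Type}

/-- the string `val(X_i)` derived by a variable -/
def val (S : SLP α) (i : Fin S.n) : List α :=
  match h : S.rule i with
  | Sum.inl a => [a]
  | Sum.inr jk =>
    have _h1 := (S.wf i jk h).1
    have _h2 := (S.wf i jk h).2
    S.val jk.1 ++ S.val jk.2
termination_by i.val

/-- the last variable `X_n` -/
def lastIdx (S : SLP α) : Fin S.n := ⟨S.n - 1, Nat.sub_lt S.npos Nat.one_pos⟩

/-- the string `T` represented by the SLP -/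
def text (S : SLP α) : List α := S.val S.lastIdx

/-- `T([i:j])`: the (1-based, inclusive) substring of a string -/
def substr (T : List α) (i j : ℕ) : List α := (T.drop (i - 1)).take (j + 1 - i)

/-- `pre(T,q)` -/
def spre (T : List α) (q : ℕ) : List α := T.take q

/-- `suf(T,q)` -/
def ssuf (T : List α) (q : ℕ) : List α := T.drop (T.length - q)

/-- `pre([b:e],q)` for intervals of positions -/
def ipre (b e q : ℕ) : Finset ℕ := Finset.Icc b (min (b + q - 1) e)

/-- `suf([b:e],q)` for intervals of positions -/
def isuf (b e q : ℕ) : Finset ℕ := Finset.Icc (max b (e + 1 - q)) e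

/-- `Occ(T,P)`: the set of (1-based) occurrences of `P` in `T` -/
def Occ [DecidableEq α] (T P : List α) : Finset ℕ :=
  (Finset.Icc 1 T.length).filter fun k => substr T k (k + P.length - 1) = P

/-- the multiset of labels of the nodes of the derivation tree rooted at
a node labeled `X_i` -/
def occsFrom (S : SLP α) (i : Fin S.n) : Multiset (Fin S.n) :=
  match h : S.rule i with
  | Sum.inl _ => {i}
  | Sum.inr jk =>
    have _h1 := (S.wf i jk h).1
    have _h2 := (S.wf i jk h).2
    i ::ₘ (S.occsFrom jk.1 + S.occsFrom jk.2)
termination_by i.val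

/-- `vOcc(X_i)`: the number of nodes of the derivation tree labeled `X_i` -/
def vOcc (S : SLP α) (i : Fin S.n) : ℕ := (S.occsFrom S.lastIdx).count i

/-- the string `t_i = suf(val(X_{ℓ(i)}),q-1) pre(val(X_{r(i)}),q-1)`
(and `[]` for a terminal rule) -/
def tstr (S : SLP α) (q : ℕ) (i : Fin S.n) : List α :=
  match S.rule i with
  | Sum.inl _ => []
  | Sum.inr jk => ssuf (S.val jk.1) (q - 1) ++ spre (S.val jk.2) (q - 1)

/-- `label(X_i) = t_i([q:|t_i|])` -/
def labelStr (S : SLP α) (q : ℕ) (i : Fin S.n) : List α := (S.tstr q i).drop (q - 1)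

/-- Nodes of the derivation tree are represented by the path from the root
(`false` = go to left child, `true` = go to right child).  `descend i p`
returns the label of the node reached from a node labeled `X_i` by path `p`. -/
def descend (S : SLP α) : Fin S.n → List Bool → Option (Fin S.n)
  | i, [] => some i
  | i, b :: p =>
    match S.rule i with
    | Sum.inl _ => none
    | Sum.inr jk => S.descend (if b then jk.2 else jk.1) p

/-- the label of the node of the derivation tree reached by path `p` from the root -/
def nodeVar (S : SLP α) (p : List Bool) : Option (Fin S.n) := S.descend S.lastIdx p

/-- `p` is a valid node of the derivation tree -/
def IsNode (S : SLP α) (p : List Bool) : Prop := (S.nodeVar p).isSome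

/-- the 0-based offset in `val(X_i)` of the part derived below path `p` -/
def offsetFrom (S : SLP α) : Fin S.n → List Bool → ℕ
  | _, [] => 0
  | i, b :: p =>
    match S.rule i with
    | Sum.inl _ => 0
    | Sum.inr jk =>
      if b then (S.val jk.1).length + S.offsetFrom jk.2 p
      else S.offsetFrom jk.1 p

/-- the 0-based offset in `T` of the interval derived by node `p` -/
def offset (S : SLP α) (p : List Bool) : ℕ := S.offsetFrom S.lastIdx p

/-- `itv(v)`: the (1-based) interval of positions of `T` derived by node `p` -/
def itv (S : SLP α) (p : List Bool) : Finset ℕ :=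
  match S.nodeVar p with
  | some i => Finset.Icc (S.offset p + 1) (S.offset p + (S.val i).length)
  | none => ∅

/-- `p = ξ(b,e)`: `p` is the deepest node whose interval contains `[b:e]`,
i.e. `itv(p) ⊇ [b:e]` and no proper descendant of `p` satisfies this. -/
def Stabs (S : SLP α) (p : List Bool) (b e : ℕ) : Prop :=
  S.IsNode p ∧ Finset.Icc b e ⊆ S.itv p ∧
  ∀ p' : List Bool, p <+: p' → p ≠ p' → S.IsNode p' → ¬ Finset.Icc b e ⊆ S.itv p'

/-- `X_j` is a right `q`-gram neighbor of `X_i` -/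
def RightNbr (S : SLP α) (q : ℕ) (i j : Fin S.n) : Prop :=
  i ≠ j ∧ ∃ u p p', 1 ≤ u ∧ u + q ≤ S.text.length ∧
    S.Stabs p u (u + q - 1) ∧ S.nodeVar p = some i ∧
    S.Stabs p' (u + 1) (u + q) ∧ S.nodeVar p' = some j

/-- `lm_q(X_i)`: the last variable of length `≥ q` on the sequence `i, ℓ(i), ℓ(ℓ(i)), …`
(meaningful when `|val(X_i)| ≥ q`) -/
def lm (S : SLP α) (q : ℕ) (i : Fin S.n) : Fin S.n :=
  match h : S.rule i with
  | Sum.inl _ => i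
  | Sum.inr jk =>
    have := (S.wf i jk h).1
    if (S.val jk.1).length < q then i else S.lm q jk.1
termination_by i.val

/-- `rm_q(X_i)`: the last variable of length `≥ q` on the sequence `i, r(i), r(r(i)), …` -/
def rm (S : SLP α) (q : ℕ) (i : Fin S.n) : Fin S.n :=
  match h : S.rule i with
  | Sum.inl _ => i
  | Sum.inr jk =>
    have := (S.wf i jk h).2
    if (S.val jk.2).length < q then i else S.rm q jk.2
termination_by i.val

/-- `lm_q` returning `null` (`none`) when `|val(X_i)| < q` -/
def lmOpt (S : SLP α) (q : ℕ) (i : Fin S.n) : Option (Fin S.n) :=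
  if (S.val i).length < q then none else some (S.lm q i)

/-- `rm_q` returning `null` (`none`) when `|val(X_i)| < q` -/
def rmOpt (S : SLP α) (q : ℕ) (i : Fin S.n) : Option (Fin S.n) :=
  if (S.val i).length < q then none else some (S.rm q i)

/-- `LSpine S i k`: `k` occurs in the sequence `i, ℓ(i), ℓ(ℓ(i)), …`
(the leftmost path of the derivation subtree rooted at a node labeled `X_i`) -/
inductive LSpine (S : SLP α) : Fin S.n → Fin S.n → Prop
  | refl (i : Fin S.n) : LSpine S i i
  | step {i k : Fin S.n} {jk : Fin S.n × Fin S.n} :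
      S.rule i = Sum.inr jk → LSpine S jk.1 k → LSpine S i k

end SLP

/-!
Follow an occurrence of a `q`-gram of `T = val(X_n)` down the derivation tree to the deepest
node containing it. Since `q ≥ 2` that node is labelled by a nonterminal `X_i` with
`|val(X_i)| ≥ q`, and the occurrence crosses the border between its two children, so it lies
inside `t_i = suf(val(X_ℓ(i)), q-1) pre(val(X_r(i)), q-1)`, which has only `|t_i| - (q-1)`
factors of length `q`. Finally `|t_i| ≤ 2(q-1)`.
-/

namespace SLP

variable {α : Type}

section QGrams

variable [DecidableEq α]

def qgrams (q : ℕ) (T : List α) : Finset (List α) :=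
  (Finset.range (T.length + 1 - q)).image fun p => (T.drop p).take q

theorem mem_qgrams {q : ℕ} {T P : List α} :
    P ∈ qgrams q T ↔ ∃ p, p + q ≤ T.length ∧ (T.drop p).take q = P := by
  simp only [qgrams, Finset.mem_image, Finset.mem_range]
  exact exists_congr fun p => and_congr_left fun _ => by omega

theorem card_qgrams_le (q : ℕ) (T : List α) : (qgrams q T).card ≤ T.length + 1 - q :=
  Finset.card_image_le.trans (Finset.card_range _).le

theorem qgrams_eq_empty_of_length_lt {q : ℕ} {T : List α} (h : T.length < q) :
    qgrams q T = ∅ := by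
  simp [qgrams, show T.length + 1 - q = 0 by omega]

theorem mem_qgrams_of_occ {q : ℕ} {T P : List α} (hP : P.length = q)
    (hocc : (Occ T P).Nonempty) : P ∈ qgrams q T := by
  obtain ⟨k, hk⟩ := hocc
  rw [Occ, Finset.mem_filter, Finset.mem_Icc, substr] at hk
  obtain ⟨⟨hk1, hkT⟩, hwin⟩ := hk
  rw [hP, show k + q - 1 + 1 - k = q by omega] at hwin
  have hlen := congrArg List.length hwin
  simp only [List.length_take, List.length_drop, hP] at hlen
  exact mem_qgrams.2 ⟨k - 1, by omega, hwin⟩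

/-- A `q`-gram crossing the border of `u ++ v` meets each side in at most `q - 1` characters. -/
theorem mem_qgrams_append {q : ℕ} {u v P : List α} (hP : P ∈ qgrams q (u ++ v)) :
    P ∈ qgrams q u ∨ P ∈ qgrams q v ∨
      P ∈ qgrams q (ssuf u (q - 1) ++ spre v (q - 1)) := by
  obtain ⟨p, hp, rfl⟩ := mem_qgrams.1 hP
  rw [List.length_append] at hp
  by_cases hleft : p + q ≤ u.length
  · refine .inl (mem_qgrams.2 ⟨p, hleft, ?_⟩)
    rw [List.drop_append_of_le_length (by omega), List.take_append_of_le_length (by simp; omega)]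
  by_cases hright : u.length ≤ p
  · refine .inr (.inl (mem_qgrams.2 ⟨p - u.length, by omega, ?_⟩))
    rw [List.drop_append, List.drop_eq_nil_of_le hright, List.nil_append]
  refine .inr (.inr (mem_qgrams.2 ⟨p - (u.length - (q - 1)), ?_, ?_⟩))
  · simp only [ssuf, spre, List.length_append, List.length_drop, List.length_take]
    omega
  · simp only [ssuf, spre, List.drop_append, List.take_append, List.drop_drop,
      List.length_drop]
    rw [show u.length - (q - 1) + (p - (u.length - (q - 1))) = p by omega,
      show p - (u.length - (q - 1)) - (u.length - (u.length - (q - 1))) = 0 by omega,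
      show p - u.length = 0 by omega, List.drop_zero, List.drop_zero, List.take_take,
      Nat.min_eq_left (by omega)]

end QGrams

variable (S : SLP α)

theorem val_of_rule_inl {i : Fin S.n} {a : α} (h : S.rule i = Sum.inl a) : S.val i = [a] := by
  rw [val]; split <;> simp_all

theorem val_of_rule_inr {i : Fin S.n} {jk : Fin S.n × Fin S.n} (h : S.rule i = Sum.inr jk) :
    S.val i = S.val jk.1 ++ S.val jk.2 := by
  rw [val]; split <;> simp_all

theorem length_tstr_of_rule_inr (q : ℕ) {i : Fin S.n} {jk : Fin S.n × Fin S.n}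
    (h : S.rule i = Sum.inr jk) :
    (S.tstr q i).length = min (q - 1) (S.val jk.1).length + min (q - 1) (S.val jk.2).length := by
  simp only [tstr, h, ssuf, spre, List.length_append, List.length_drop, List.length_take]
  omega

theorem length_tstr_le_two_mul (q : ℕ) (i : Fin S.n) : (S.tstr q i).length ≤ 2 * (q - 1) := by
  cases h : S.rule i with
  | inl => simp [tstr, h]
  | inr jk => rw [S.length_tstr_of_rule_inr q h]; omega

theorem length_tstr_le_length_val (q : ℕ) (i : Fin S.n) :
    (S.tstr q i).length ≤ (S.val i).length := by
  cases h : S.rule i with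
  | inl => simp [tstr, h]
  | inr jk => rw [S.length_tstr_of_rule_inr q h, S.val_of_rule_inr h, List.length_append]; omega

def longNonterminals (q : ℕ) : Finset (Fin S.n) :=
  Finset.univ.filter fun i => (S.rule i).isRight = true ∧ q ≤ (S.val i).length

theorem qgrams_val_subset [DecidableEq α] {q : ℕ} (hq : 2 ≤ q) (i : Fin S.n) :
    qgrams q (S.val i) ⊆ (S.longNonterminals q).biUnion fun j => qgrams q (S.tstr q j) := by
  induction i using WellFoundedLT.induction with
  | _ i ih =>
  cases hrule : S.rule i with
  | inl a =>
    rw [S.val_of_rule_inl hrule, qgrams_eq_empty_of_length_lt (by simp; omega)]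
    exact Finset.empty_subset _
  | inr jk =>
    intro P hP
    rw [S.val_of_rule_inr hrule] at hP
    rcases mem_qgrams_append hP with hleft | hright | hjunction
    · exact ih jk.1 (S.wf i jk hrule).1 hleft
    · exact ih jk.2 (S.wf i jk hrule).2 hright
    · have htstr : S.tstr q i = ssuf (S.val jk.1) (q - 1) ++ spre (S.val jk.2) (q - 1) := by
        rw [tstr, hrule]
      rw [← htstr] at hjunction
      obtain ⟨p, hp, -⟩ := mem_qgrams.1 hjunction
      have hlong : q ≤ (S.val i).length := by
        have := S.length_tstr_le_length_val q i
        omega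
      exact Finset.mem_biUnion.2 ⟨i, by simp [longNonterminals, hrule, hlong], hjunction⟩

end SLP

theorem stmt15_general {α : Type} [DecidableEq α] (q : ℕ) (hq : 2 ≤ q) (S : SLP α) :
    Set.ncard {P : List α | P.length = q ∧ (SLP.Occ S.text P).Nonempty}
      ≤ (∑ i ∈ Finset.univ.filter
          (fun i : Fin S.n => (S.rule i).isRight = true ∧ q ≤ (S.val i).length),
          ((S.tstr q i).length - (q - 1))) ∧
    (∑ i ∈ Finset.univ.filter
        (fun i : Fin S.n => (S.rule i).isRight = true ∧ q ≤ (S.val i).length),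
        ((S.tstr q i).length - (q - 1))) ≤ (q - 1) * S.n := by
  change _ ≤ ∑ i ∈ S.longNonterminals q, _ ∧ ∑ i ∈ S.longNonterminals q, _ ≤ _
  constructor
  · have hocc : {P : List α | P.length = q ∧ (SLP.Occ S.text P).Nonempty} ⊆
        ↑(SLP.qgrams q S.text) := fun P hP => SLP.mem_qgrams_of_occ hP.1 hP.2
    calc _ ≤ (SLP.qgrams q S.text).card :=
          (Set.ncard_le_ncard hocc (Finset.finite_toSet _)).trans_eq (Set.ncard_coe_finset _)
      _ ≤ ((S.longNonterminals q).biUnion fun j => SLP.qgrams q (S.tstr q j)).card :=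
          Finset.card_le_card (S.qgrams_val_subset hq S.lastIdx)
      _ ≤ ∑ j ∈ S.longNonterminals q, (SLP.qgrams q (S.tstr q j)).card := Finset.card_biUnion_le
      _ ≤ _ := Finset.sum_le_sum fun j _ => (SLP.card_qgrams_le q _).trans (by omega)
  · calc _ ≤ ∑ _j ∈ S.longNonterminals q, (q - 1) :=
          Finset.sum_le_sum fun j _ => by have := S.length_tstr_le_two_mul q j; omega
      _ = (S.longNonterminals q).card * (q - 1) := by rw [Finset.sum_const, smul_eq_mul]
      _ ≤ (q - 1) * S.n := by
          rw [mul_comm]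
          exact Nat.mul_le_mul_left _ ((Finset.card_le_univ _).trans_eq (Fintype.card_fin _))

/-- the number of distinct `q`-grams occurring in `T` is at
most `Σ (|t_i| - (q-1))` (over nonterminal variables with `|val(X_i)| ≥ q`),
which is at most `(q-1)·n`. -/
theorem stmt15 {α : Type} [DecidableEq α] (q : ℕ) (hq : 2 ≤ q) (S : SLP α)
    (hT : q ≤ S.text.length) :
    Set.ncard {P : List α | P.length = q ∧ (SLP.Occ S.text P).Nonempty}
      ≤ (∑ i ∈ Finset.univ.filter
          (fun i : Fin S.n => (S.rule i).isRight = true ∧ q ≤ (S.val i).length),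
          ((S.tstr q i).length - (q - 1))) ∧
    (∑ i ∈ Finset.univ.filter
        (fun i : Fin S.n => (S.rule i).isRight = true ∧ q ≤ (S.val i).length),
        ((S.tstr q i).length - (q - 1))) ≤ (q - 1) * S.n :=
  stmt15_general q hq S
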